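/- arXiv:2605.14409 — 3 statements merged into one kernel-verified Lean document; each statement's English description precedes it below -/
import Mathlib

section
/- Let $h_1, \dots, h_k : \mathbb{R}^m \to \mathbb{R}$ be continuously differentiable, let $\mathcal{Y} = \{y : h_i(y) \le 0, \ i = 1, \dots, k\}$, and let $K \subset \mathbb{R}^m$ be compact with $\mathcal{Y} \subset \mathrm{int}(K)$. Assume that at every $y \in \mathcal{Y}$ the gradients of the active constraints are linearly independent. Then there exist constants $\rho > 0$ and $\sigma_* > 0$ such that for every $y \in K$ with $\max_{1 \le i \le k} h_i(y) \le \rho$ and every nonempty index set $J \subseteq \{1,\dots,k\}$ with $|h_j(y)| \le \rho$ for all $j \in J$, the smallest singular value of the matrix whose rows are $\nabla h_j(y)^\top$, $j \in J$, is at least $\sigma_*$. -/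
/-!
Fix an index set `J`. On the compact set of pairs `(y, c)` with `y ∈ K` and `c` a unit vector
supported on `J`, LICQ says that `‖∑ j ∈ J, c j • ∇h_j y‖` is positive wherever `y` is feasible and
every `h_j`, `j ∈ J`, vanishes at `y`. By compactness the bound persists, with a positive constant
`t_J`, once these constraints are only required up to `t_J`. Homogeneity in `c` removes the
normalisation, and `ρ = σ = min_J t_J` works for all of the finitely many `J`.
-/

open Set Metric

theorem IsCompact.exists_pos_forall_le_of_nonpos {X ι : Type*} [TopologicalSpace X] {C : Set X}
    (hC : IsCompact C) {g : ι → X → ℝ} (hg : ∀ i, LowerSemicontinuous (g i)) {f : X → ℝ}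
    (hf : LowerSemicontinuous f) (hpos : ∀ x ∈ C, (∀ i, g i x ≤ 0) → 0 < f x) :
    ∃ t > 0, ∀ x ∈ C, (∀ i, g i x ≤ t) → t ≤ f x := by
  let U : Ioi (0 : ℝ) → Set X := fun t => {x | t < f x} ∪ ⋃ i, {x | t < g i x}
  have hU_open : ∀ t, IsOpen (U t) := fun t =>
    (hf.isOpen_preimage t).union (isOpen_iUnion fun i => (hg i).isOpen_preimage t)
  have hU_antitone : Antitone U := fun s t hst =>
    union_subset_union (fun _ hx => lt_of_le_of_lt (α := ℝ) hst hx)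
      (iUnion_mono fun _ _ hx => lt_of_le_of_lt (α := ℝ) hst hx)
  have hCU : C ⊆ ⋃ t, U t := by
    intro x hx
    by_cases hg0 : ∀ i, g i x ≤ 0
    · have hfx := hpos x hx hg0
      exact mem_iUnion.2 ⟨⟨f x / 2, half_pos hfx⟩, Or.inl (half_lt_self hfx)⟩
    · obtain ⟨i, hi⟩ := not_forall.1 hg0
      have hi := lt_of_not_ge hi
      exact mem_iUnion.2 ⟨⟨g i x / 2, half_pos hi⟩, Or.inr (mem_iUnion.2 ⟨i, half_lt_self hi⟩)⟩
  obtain ⟨⟨t, ht⟩, hCt⟩ := hC.elim_directed_cover U hU_open hCU hU_antitone.directed_le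
  refine ⟨t, ht, fun x hx hgx => ?_⟩
  rcases hCt hx with hfx | hgx'
  · exact le_of_lt hfx
  · obtain ⟨i, hi⟩ := mem_iUnion.1 hgx'
    exact absurd (hgx i) (not_le.2 hi)

theorem ContDiff.continuous_gradient {F : Type*} [NormedAddCommGroup F] [InnerProductSpace ℝ F]
    [CompleteSpace F] {f : F → ℝ} (hf : ContDiff ℝ 1 f) : Continuous (gradient f) :=
  (InnerProductSpace.toDual ℝ F).symm.continuous.comp (hf.continuous_fderiv one_ne_zero)

section Constraints

variable {E ι : Type*} [NormedAddCommGroup E] [InnerProductSpace ℝ E] [CompleteSpace E]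
  [Fintype ι] {h : ι → E → ℝ}

lemma exists_pos_forall_mul_norm_le_norm_sum_smul_gradient (hcont : ∀ i, Continuous (h i))
    (hgrad : ∀ i, Continuous (gradient (h i))) {K : Set E} (hK : IsCompact K)
    (licq : ∀ y, (∀ i, h i y ≤ 0) →
      LinearIndependent ℝ (fun i : {i : ι // h i y = 0} => gradient (h i.1) y))
    (J : Finset ι) :
    ∃ t > (0 : ℝ), ∀ y ∈ K, (∀ i, h i y ≤ t) → (∀ j ∈ J, |h j y| ≤ t) →
      ∀ c : EuclideanSpace ℝ ι, (∀ i, i ∉ J → c i = 0) →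
        t * ‖c‖ ≤ ‖∑ j ∈ J, c j • gradient (h j) y‖ := by
  let S : Set (EuclideanSpace ℝ ι) := sphere 0 1 ∩ {c | ∀ i ∉ J, c i = 0}
  have hS : IsCompact S := (isCompact_sphere 0 1).inter_right <| by
    simp only [ofPred_forall]
    exact isClosed_iInter fun i => isClosed_iInter fun _ =>
      isClosed_eq (PiLp.continuous_apply 2 _ i) continuous_const
  let g : ι ⊕ J → E × EuclideanSpace ℝ ι → ℝ :=
    Sum.elim (fun i p => h i p.1) (fun j p => |h j p.1|)
  let f : E × EuclideanSpace ℝ ι → ℝ := fun p => ‖∑ j ∈ J, p.2 j • gradient (h j) p.1‖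
  have hg : ∀ i, LowerSemicontinuous (g i) := Sum.forall.2
    ⟨fun i => ((hcont i).comp continuous_fst).lowerSemicontinuous,
      fun j => ((hcont j).comp continuous_fst).abs.lowerSemicontinuous⟩
  have hf : LowerSemicontinuous f := Continuous.lowerSemicontinuous (by fun_prop)
  have hpos : ∀ p ∈ K ×ˢ S, (∀ i, g i p ≤ 0) → 0 < f p := by
    rintro ⟨y, c⟩ ⟨-, hc1, hcJ⟩ hy
    rw [Sum.forall] at hy
    have hact : (J : Set ι) ⊆ {i | h i y = 0} := fun j hj =>
      le_antisymm (hy.1 j) (abs_nonpos_iff.1 (hy.2 ⟨j, hj⟩)).ge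
    have hli : LinearIndepOn ℝ (fun i => gradient (h i) y) {i | h i y = 0} := licq y hy.1
    refine norm_pos_iff.2 fun hsum => ne_of_mem_sphere hc1 one_ne_zero ?_
    have hcJ0 := linearIndepOn_finset_iff.1 (hli.mono hact) c hsum
    ext i
    by_cases hi : i ∈ J
    · exact hcJ0 i hi
    · exact hcJ i hi
  obtain ⟨t, ht, hbound⟩ := (hK.prod hS).exists_pos_forall_le_of_nonpos hg hf hpos
  refine ⟨t, ht, fun y hy hle habs c hc => ?_⟩
  rcases eq_or_ne c 0 with rfl | hc0
  · simp
  have hunit : ‖c‖⁻¹ • c ∈ S := ⟨by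
    rw [mem_sphere_zero_iff_norm, norm_smul, norm_inv, norm_norm,
      inv_mul_cancel₀ (norm_ne_zero_iff.2 hc0)], fun i hi => by simp [hc i hi]⟩
  have hscale : f (y, ‖c‖⁻¹ • c) = ‖c‖⁻¹ * ‖∑ j ∈ J, c j • gradient (h j) y‖ := by
    simp only [f, PiLp.smul_apply, smul_eq_mul, mul_smul, ← Finset.smul_sum, norm_smul, norm_inv,
      norm_norm]
  have := hbound (y, ‖c‖⁻¹ • c) ⟨hy, hunit⟩ (Sum.forall.2 ⟨hle, fun j => habs j j.2⟩)
  rw [hscale] at this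
  exact (le_inv_mul_iff₀' (norm_pos_iff.2 hc0)).1 this

end Constraints

theorem stmt2_general {m k : ℕ}
    (h : Fin k → EuclideanSpace ℝ (Fin m) → ℝ)
    (hh : ∀ i, ContDiff ℝ 1 (h i))
    (K : Set (EuclideanSpace ℝ (Fin m)))
    (hK : IsCompact K)
    (licq : ∀ y, (∀ i, h i y ≤ 0) →
      LinearIndependent ℝ (fun i : {i : Fin k // h i y = 0} => gradient (h i.1) y)) :
    ∃ ρ > (0:ℝ), ∃ σ > (0:ℝ),
      ∀ y ∈ K, (∀ i, h i y ≤ ρ) →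
        ∀ J : Finset (Fin k), J.Nonempty → (∀ j ∈ J, |h j y| ≤ ρ) →
          ∀ c : EuclideanSpace ℝ (Fin k), (∀ i, i ∉ J → c i = 0) →
            σ * ‖c‖ ≤ ‖∑ j ∈ J, c j • gradient (h j) y‖ := by
  choose t ht hbound using exists_pos_forall_mul_norm_le_norm_sum_smul_gradient
    (fun i => (hh i).continuous) (fun i => (hh i).continuous_gradient) hK licq
  set ρ := Finset.univ.inf' Finset.univ_nonempty t
  have hρ : 0 < ρ := (Finset.lt_inf'_iff _).2 fun J _ => ht J
  have hρt : ∀ J, ρ ≤ t J := fun J => Finset.inf'_le _ (Finset.mem_univ J)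
  refine ⟨ρ, hρ, ρ, hρ, fun y hy hle J _ habs c hc => ?_⟩
  calc ρ * ‖c‖ ≤ t J * ‖c‖ := by gcongr; exact hρt J
    _ ≤ _ := hbound J y hy (fun i => (hle i).trans (hρt J)) (fun j hj => (habs j hj).trans (hρt J))
      c hc

/-- Uniform lower bound on the smallest singular value of nearly-active constraint
gradients, under LICQ on the feasible set.  The smallest-singular-value bound
`σ_min(A) ≥ σ` for the matrix `A` whose rows are the gradients `∇ h_j (y)`, `j ∈ J`,
is expressed as `‖Aᵀ c‖ = ‖∑ j ∈ J, c j • ∇ h_j (y)‖ ≥ σ ‖c‖` for all coefficient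
vectors `c` supported on `J`. -/
theorem stmt2 {m k : ℕ}
    (h : Fin k → EuclideanSpace ℝ (Fin m) → ℝ)
    (hh : ∀ i, ContDiff ℝ 1 (h i))
    (K : Set (EuclideanSpace ℝ (Fin m)))
    (hK : IsCompact K)
    (hYK : {y | ∀ i, h i y ≤ 0} ⊆ interior K)
    (licq : ∀ y, (∀ i, h i y ≤ 0) →
      LinearIndependent ℝ (fun i : {i : Fin k // h i y = 0} => gradient (h i.1) y)) :
    ∃ ρ > (0:ℝ), ∃ σ > (0:ℝ),
      ∀ y ∈ K, (∀ i, h i y ≤ ρ) →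
        ∀ J : Finset (Fin k), J.Nonempty → (∀ j ∈ J, |h j y| ≤ ρ) →
          ∀ c : EuclideanSpace ℝ (Fin k), (∀ i, i ∉ J → c i = 0) →
            σ * ‖c‖ ≤ ‖∑ j ∈ J, c j • gradient (h j) y‖ :=
  stmt2_general h hh K hK licq
end

section
/- Let $X$ be a connected, locally path-connected, simply connected, locally compact Hausdorff space, and $Y$ a locally compact Hausdorff space. Let $S \subset X \times Y$ and let $p : S \to X$ be the projection $p(x,y) = x$. Assume: (1) $p$ is a local homeomorphism; (2) $S$ is closed in $X \times Y$; (3) there is a compact set $K \subset Y$ with $S \subset X \times K$. Then for any $(x_0, y_0) \in S$ there exists a unique continuous map $y : X \to Y$ with $y(x_0) = y_0$ and $(x, y(x)) \in S$ for all $x \in X$. -/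
open Set

section Aux

variable {E X : Type*} [TopologicalSpace E] [TopologicalSpace X] {p : E → X}

/-- Every point has an open neighborhood `V` such that every point of `p ⁻¹' V` lies
on a continuous section of `p` defined on all of `V`. -/
def Stmt4EvenlySect (p : E → X) : Prop :=
  ∀ x : X, ∃ V : Set X, IsOpen V ∧ x ∈ V ∧ ∀ e : E, p e ∈ V →
    ∃ σ : X → E, ContinuousOn σ V ∧ (∀ v ∈ V, p (σ v) = v) ∧ σ (p e) = e

theorem stmt4_glue {α : Type*} [TopologicalSpace α] {f h : ℝ → α} {a b c : ℝ}
    (hab : a ≤ b) (hbc : b ≤ c)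
    (hf : ContinuousOn f (Icc a b)) (hh : ContinuousOn h (Icc b c)) (he : f b = h b) :
    ContinuousOn (fun t => if t ≤ b then f t else h t) (Icc a c) := by
  have heq : (fun t => if t ≤ b then f t else h t) = (Iic b).piecewise f h := by
    ext t; simp [Set.piecewise, Set.mem_Iic]
  rw [heq]
  apply ContinuousOn.piecewise
  · intro t ht
    rw [frontier_Iic] at ht
    rcases ht with ⟨-, ht⟩
    simp only [Set.mem_singleton_iff] at ht
    subst ht; exact he
  · rw [isClosed_Iic.closure_eq]
    exact hf.mono fun t ht => ⟨ht.1.1, ht.2⟩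
  · rw [compl_Iic, closure_Ioi]
    exact hh.mono fun t ht => ⟨ht.2, ht.1.2⟩


theorem stmt4_lift_exists (hev : Stmt4EvenlySect p) {γ : ℝ → X} (hγ : Continuous γ)
    (e₀ : E) (he₀ : p e₀ = γ 0) :
    ∃ g : ℝ → E, ContinuousOn g (Icc 0 1) ∧ g 0 = e₀ ∧ ∀ t ∈ Icc (0:ℝ) 1, p (g t) = γ t := by
  choose V hVo hVm hVs using hev
  obtain ⟨δ, hδ0, hδ⟩ := lebesgue_number_lemma_of_metric (isCompact_Icc (a := (0:ℝ)) (b := 1))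
    (fun x => (hVo x).preimage hγ) (fun t _ => Set.mem_iUnion.mpr ⟨γ t, hVm (γ t)⟩)
  obtain ⟨n, hn⟩ := exists_nat_one_div_lt hδ0
  set N : ℕ := n + 1 with hNdef
  have hN0 : (0:ℝ) < N := by positivity
  have hN : 1 / (N:ℝ) < δ := by exact_mod_cast hn
  have main : ∀ j : ℕ, j ≤ N → ∃ g : ℝ → E, ContinuousOn g (Icc 0 ((j:ℝ)/N)) ∧ g 0 = e₀ ∧
      ∀ t ∈ Icc (0:ℝ) ((j:ℝ)/N), p (g t) = γ t := by
    intro j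
    induction j with
    | zero =>
      intro _
      refine ⟨fun _ => e₀, continuousOn_const, rfl, ?_⟩
      intro t ht
      simp only [Nat.cast_zero, zero_div, Set.Icc_self, Set.mem_singleton_iff] at ht
      rw [ht, he₀]
    | succ j ih =>
      intro hjN
      obtain ⟨g, hgc, hg0, hgp⟩ := ih (le_of_lt (Nat.lt_of_succ_le hjN))
      set a : ℝ := (j:ℝ)/N with ha
      set b : ℝ := ((j+1:ℕ):ℝ)/N with hb
      have ha0 : 0 ≤ a := by positivity
      have hab : a ≤ b := by
        rw [ha, hb]
        gcongr
        exact_mod_cast Nat.le_succ j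
      have hb1 : b ≤ 1 := by
        rw [hb, div_le_one hN0]
        exact_mod_cast hjN
      have ha1 : a ∈ Icc (0:ℝ) 1 := ⟨ha0, le_trans hab hb1⟩
      obtain ⟨x, hx⟩ := hδ a ha1
      have hγa : γ a ∈ V x := hx (Metric.mem_ball_self hδ0)
      have hga : p (g a) = γ a := hgp a ⟨ha0, le_refl a⟩
      obtain ⟨σ, hσc, hσp, hσe⟩ := hVs x (g a) (by rw [hga]; exact hγa)
      have hsub : Icc a b ⊆ Metric.ball a δ := by
        intro t ht
        rw [Metric.mem_ball, Real.dist_eq, abs_of_nonneg (sub_nonneg.mpr ht.1)]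
        have : t - a ≤ b - a := by linarith [ht.2]
        have hba : b - a = 1 / N := by
          rw [hb, ha, div_sub_div_same]
          push_cast; ring_nf
        linarith
      have hmaps : ∀ t ∈ Icc a b, γ t ∈ V x := fun t ht => hx (hsub ht)
      refine ⟨fun t => if t ≤ a then g t else σ (γ t), ?_, ?_, ?_⟩
      · exact stmt4_glue ha0 hab hgc
          (hσc.comp hγ.continuousOn fun t ht => hmaps t ht) (by rw [← hga]; exact hσe.symm)
      · simp only [if_pos ha0]; exact hg0
      · intro t ht
        show p (if t ≤ a then g t else σ (γ t)) = γ t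
        by_cases hta : t ≤ a
        · rw [if_pos hta]; exact hgp t ⟨ht.1, hta⟩
        · rw [if_neg hta]
          exact hσp (γ t) (hmaps t ⟨le_of_not_ge hta, ht.2⟩)
  obtain ⟨g, hgc, hg0, hgp⟩ := main N (le_refl N)
  have : ((N:ℝ))/N = 1 := div_self (ne_of_gt hN0)
  rw [this] at hgc hgp
  exact ⟨g, hgc, hg0, hgp⟩


theorem stmt4_homotopy_inv (sep : IsSeparatedMap p) (inj : IsLocallyInjective p)
    (hev : Stmt4EvenlySect p) {H : ℝ × ℝ → X} (hH : Continuous H)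
    (h1 : ∀ s ∈ Icc (0:ℝ) 1, H (1, s) = H (1, 0))
    {g : ℝ → ℝ → E}
    (hgc : ∀ s ∈ Icc (0:ℝ) 1, ContinuousOn (g s) (Icc 0 1))
    (hg0 : ∀ s ∈ Icc (0:ℝ) 1, g s 0 = g 0 0)
    (hgp : ∀ s ∈ Icc (0:ℝ) 1, ∀ t ∈ Icc (0:ℝ) 1, p (g s t) = H (t, s)) :
    g 1 1 = g 0 1 := by
  choose V hVo hVm hVs using hev
  have key : ∀ s₀ ∈ Icc (0:ℝ) 1, ∃ δ > 0, ∀ s ∈ Icc (0:ℝ) 1, |s - s₀| < δ → g s 1 = g s₀ 1 := by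
    intro s₀ hs₀
    have hQ : IsCompact ((Icc (0:ℝ) 1) ×ˢ ({s₀} : Set ℝ)) :=
      isCompact_Icc.prod isCompact_singleton
    obtain ⟨δ, hδ0, hδ⟩ := lebesgue_number_lemma_of_metric hQ
      (fun x => (hVo x).preimage hH)
      (fun q _ => Set.mem_iUnion.mpr ⟨H q, hVm (H q)⟩)
    obtain ⟨n, hn⟩ := exists_nat_one_div_lt hδ0
    set N : ℕ := n + 1 with hNdef
    have hN0 : (0:ℝ) < N := by positivity
    have hN : 1 / (N:ℝ) < δ := by exact_mod_cast hn
    set J : Set ℝ := Ioo (s₀ - δ) (s₀ + δ) ∩ Icc 0 1 with hJ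
    have hJconn : IsPreconnected J :=
      (Set.ordConnected_Ioo.inter Set.ordConnected_Icc).isPreconnected
    have hs₀J : s₀ ∈ J := ⟨⟨by linarith, by linarith⟩, hs₀⟩
    have hJsub : J ⊆ Icc 0 1 := fun s hs => hs.2
    have main : ∀ j : ℕ, j ≤ N → ContinuousOn (fun s => g s ((j:ℝ)/N)) J := by
      intro j
      induction j with
      | zero =>
        intro _
        apply continuousOn_const.congr
        intro s hs
        simp only [Nat.cast_zero, zero_div]
        exact hg0 s (hJsub hs)
      | succ j ih =>
        intro hjN
        have hIH := ih (le_of_lt (Nat.lt_of_succ_le hjN))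
        set a : ℝ := (j:ℝ)/N with ha
        set b : ℝ := ((j+1:ℕ):ℝ)/N with hb
        have ha0 : 0 ≤ a := by positivity
        have hab : a ≤ b := by
          rw [ha, hb]; gcongr
          exact_mod_cast Nat.le_succ j
        have hb1 : b ≤ 1 := by
          rw [hb, div_le_one hN0]; exact_mod_cast hjN
        have ha01 : a ∈ Icc (0:ℝ) 1 := ⟨ha0, le_trans hab hb1⟩
        have hb01 : b ∈ Icc (0:ℝ) 1 := ⟨le_trans ha0 hab, hb1⟩
        have habsub : Icc a b ⊆ Icc (0:ℝ) 1 := fun t ht => ⟨le_trans ha0 ht.1, le_trans ht.2 hb1⟩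
        obtain ⟨x, hx⟩ := hδ (a, s₀) (Set.mk_mem_prod ha01 rfl)
        have hball : ∀ t ∈ Icc a b, ∀ s ∈ J, H (t, s) ∈ V x := by
          intro t ht s hs
          apply hx
          rw [Metric.mem_ball, Prod.dist_eq, max_lt_iff]
          constructor
          · rw [Real.dist_eq, abs_of_nonneg (sub_nonneg.mpr ht.1)]
            have hba : b - a = 1 / N := by
              rw [hb, ha, div_sub_div_same]; push_cast; ring_nf
            have := ht.2
            linarith
          · rw [Real.dist_eq, abs_lt]
            constructor <;> [linarith [hs.1.1]; linarith [hs.1.2]]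
        -- section through g s₀ a
        have hpa : p (g s₀ a) = H (a, s₀) := hgp s₀ hs₀ a ha01
        have hHa : H (a, s₀) ∈ V x := hball a ⟨le_refl a, hab⟩ s₀ hs₀J
        obtain ⟨σ, hσc, hσp, hσe⟩ := hVs x (g s₀ a) (by rw [hpa]; exact hHa)
        have hHacont : ContinuousOn (fun s => σ (H (a, s))) J := by
          have hc : ContinuousOn (fun s : ℝ => H (a, s)) J :=
            (hH.comp (continuous_const.prodMk continuous_id)).continuousOn
          exact ContinuousOn.comp hσc hc fun s hs => hball a ⟨le_refl a, hab⟩ s hs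
        -- (i)
        have heqa : Set.EqOn (fun s => g s a) (fun s => σ (H (a, s))) J := by
          apply sep.eqOn_of_comp_eqOn inj hJconn hIH hHacont
          · intro s hs
            show p (g s a) = p (σ (H (a, s)))
            rw [hgp s (hJsub hs) a ha01, hσp _ (hball a ⟨le_refl a, hab⟩ s hs)]
          · exact hs₀J
          · show g s₀ a = σ (H (a, s₀))
            rw [← hpa, hσe]
        -- (ii)
        have heqb : ∀ s ∈ J, g s b = σ (H (b, s)) := by
          intro s hs
          have : Set.EqOn (g s) (fun t => σ (H (t, s))) (Icc a b) := by
            apply sep.eqOn_of_comp_eqOn inj isPreconnected_Icc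
              ((hgc s (hJsub hs)).mono habsub)
              (ContinuousOn.comp hσc
                ((hH.comp (continuous_id.prodMk continuous_const)).continuousOn
                  (s := Icc a b))
                fun t ht => hball t ht s hs)
            · intro t ht
              show p (g s t) = p (σ (H (t, s)))
              rw [hgp s (hJsub hs) t (habsub ht), hσp _ (hball t ht s hs)]
            · exact ⟨le_refl a, hab⟩
            · show g s a = σ (H (a, s))
              exact heqa hs
          exact this ⟨hab, le_refl b⟩
        have hHbcont : ContinuousOn (fun s => σ (H (b, s))) J := by
          have hc : ContinuousOn (fun s : ℝ => H (b, s)) J :=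
            (hH.comp (continuous_const.prodMk continuous_id)).continuousOn
          exact ContinuousOn.comp hσc hc fun s hs => hball b ⟨hab, le_refl b⟩ s hs
        exact hHbcont.congr fun s hs => heqb s hs
    have hcont1 : ContinuousOn (fun s => g s 1) J := by
      have := main N (le_refl N)
      rwa [div_self (ne_of_gt hN0)] at this
    have heq : Set.EqOn (fun s => g s 1) (fun _ => g s₀ 1) J := by
      apply sep.eqOn_of_comp_eqOn inj hJconn hcont1 continuousOn_const
      · intro s hs
        show p (g s 1) = p (g s₀ 1)
        rw [hgp s (hJsub hs) 1 (by norm_num), hgp s₀ hs₀ 1 (by norm_num),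
          h1 s (hJsub hs), h1 s₀ hs₀]
      · exact hs₀J
      · rfl
    exact ⟨δ, hδ0, fun s hs hd => heq ⟨⟨by cases abs_lt.mp hd; linarith, by
      cases abs_lt.mp hd; linarith⟩, hs⟩⟩
  -- globalize
  have hcont : ContinuousOn (fun s => g s 1) (Icc 0 1) := by
    intro s₀ hs₀
    obtain ⟨δ, hδ0, hδ⟩ := key s₀ hs₀
    apply ContinuousWithinAt.congr_of_eventuallyEq (continuousWithinAt_const)
    · apply Filter.mem_of_superset
        (mem_nhdsWithin.mpr ⟨Ioo (s₀ - δ) (s₀ + δ), isOpen_Ioo,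
          ⟨by linarith, by linarith⟩, Set.Subset.refl _⟩)
      rintro s ⟨hs1, hs2⟩
      exact hδ s hs2 (abs_lt.mpr ⟨by linarith [hs1.1], by linarith [hs1.2]⟩)
    · exact (hδ s₀ hs₀ (by simpa using hδ0)).symm ▸ rfl
  have final : Set.EqOn (fun s => g s 1) (fun _ => g 0 1) (Icc 0 1) := by
    apply sep.eqOn_of_comp_eqOn inj isPreconnected_Icc hcont continuousOn_const
    · intro s hs
      show p (g s 1) = p (g 0 1)
      rw [hgp s hs 1 (by norm_num), hgp 0 (by norm_num) 1 (by norm_num),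
        h1 s hs, h1 0 (by norm_num)]
    · exact ⟨le_refl 0, zero_le_one⟩
    · rfl
  exact final ⟨zero_le_one, le_refl 1⟩


theorem stmt4_trans_extend {Z : Type*} [TopologicalSpace Z] {x y z : Z}
    (γ : Path x y) (γ' : Path y z) {t : ℝ} (ht : t ∈ Icc (0:ℝ) 1) :
    (γ.trans γ').extend t = if t ≤ 1/2 then γ.extend (2*t) else γ'.extend (2*t - 1) := by
  rw [Path.extend_apply _ ht, Path.trans_apply]
  by_cases h : t ≤ 1/2
  · rw [dif_pos h, if_pos h, Path.extend_apply γ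
      (⟨by linarith [ht.1], by linarith⟩ : 2*t ∈ Icc (0:ℝ) 1)]
  · rw [dif_neg h, if_neg h, Path.extend_apply γ'
      (⟨by linarith [not_le.mp h], by linarith [ht.2]⟩ : 2*t - 1 ∈ Icc (0:ℝ) 1)]

end Aux



/-- Global unique continuous section through a closed, uniformly compact solution
set whose projection to a simply connected base is a local homeomorphism. -/
theorem stmt4 {X Y : Type*} [TopologicalSpace X] [TopologicalSpace Y]
    [ConnectedSpace X] [LocallyPathConnectedSpace X] [SimplyConnectedSpace X]
    [LocallyCompactSpace X] [T2Space X]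
    [LocallyCompactSpace Y] [T2Space Y]
    (S : Set (X × Y))
    (hloc : IsLocalHomeomorph (fun s : S => (s : X × Y).1))
    (hclosed : IsClosed S)
    (K : Set Y) (hK : IsCompact K) (hSK : S ⊆ Set.univ ×ˢ K)
    (x₀ : X) (y₀ : Y) (h₀ : (x₀, y₀) ∈ S) :
    ∃! f : X → Y, Continuous f ∧ f x₀ = y₀ ∧ ∀ x, (x, f x) ∈ S := by
  classical
  set p : S → X := fun s => (s : X × Y).1 with hp
  have pcont : Continuous p := hloc.continuous
  have sep : IsSeparatedMap p := fun e₁ e₂ _ hne => t2_separation hne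
  have inj : IsLocallyInjective p := by
    intro e
    obtain ⟨φ, he, hφ⟩ := hloc e
    exact ⟨φ.source, φ.open_source, he, hφ ▸ φ.injOn⟩
  have hcp : ∀ {N : Set X}, IsCompact N → IsCompact (p ⁻¹' N) := by
    intro N hN
    have hpre : p ⁻¹' N = (Subtype.val : S → X × Y) ⁻¹' (N ×ˢ K) := by
      ext e
      simp only [Set.mem_preimage, Set.mem_prod]
      exact ⟨fun h => ⟨h, (hSK e.2).2⟩, fun h => h.1⟩
    rw [hpre]
    exact hclosed.isClosedEmbedding_subtypeVal.isCompact_preimage (hN.prod hK)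
  have hev : Stmt4EvenlySect p := by
    intro x
    have hfib : IsCompact (p ⁻¹' {x}) := hcp isCompact_singleton
    choose φ hmem hφ using fun e : ↥(p ⁻¹' {x}) => hloc ↑e
    have hFfin : (p ⁻¹' {x}).Finite := by
      obtain ⟨t, ht⟩ := hfib.elim_finite_subcover (fun e : ↥(p ⁻¹' {x}) => (φ e).source)
        (fun e => (φ e).open_source) (fun e he => Set.mem_iUnion.mpr ⟨⟨e, he⟩, hmem ⟨e, he⟩⟩)
      apply Set.Finite.subset (Set.Finite.image (fun e : ↥(p ⁻¹' {x}) => (e : S)) t.finite_toSet)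
      intro e he
      obtain ⟨i, hit, hei⟩ := Set.mem_iUnion₂.mp (ht he)
      refine ⟨i, hit, ?_⟩
      have h1 : (φ i) ↑i = (φ i) e := by
        rw [← congrFun (hφ i) ↑i, ← congrFun (hφ i) e,
          Set.mem_singleton_iff.mp i.2, Set.mem_singleton_iff.mp he]
      exact (φ i).injOn (hmem i) hei h1
    haveI : Finite ↥(p ⁻¹' {x}) := hFfin.to_subtype
    set W : Set X := ⋂ e : ↥(p ⁻¹' {x}), (φ e).target with hW
    have hWo : IsOpen W := isOpen_iInter_of_finite fun e => (φ e).open_target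
    have hWx : x ∈ W := Set.mem_iInter.mpr fun e => by
      have h := (φ e).map_source (hmem e)
      rwa [← congrFun (hφ e) ↑e, Set.mem_singleton_iff.mp e.2] at h
    set U : Set S := ⋃ e : ↥(p ⁻¹' {x}), (φ e).source with hU
    obtain ⟨Nc, hNc, hNn⟩ := exists_compact_mem_nhds x
    have hD : IsCompact ((p ⁻¹' Nc) \ U) :=
      (hcp hNc).diff (isOpen_iUnion fun e => (φ e).open_source)
    have hpD : IsClosed (p '' ((p ⁻¹' Nc) \ U)) := (hD.image pcont).isClosed
    have hxD : x ∉ p '' ((p ⁻¹' Nc) \ U) := by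
      rintro ⟨e, ⟨-, heU⟩, hex⟩
      exact heU (Set.mem_iUnion.mpr
        ⟨⟨e, Set.mem_singleton_iff.mpr hex⟩, hmem ⟨e, Set.mem_singleton_iff.mpr hex⟩⟩)
    refine ⟨interior Nc ∩ W ∩ (p '' ((p ⁻¹' Nc) \ U))ᶜ,
      (isOpen_interior.inter hWo).inter hpD.isOpen_compl,
      ⟨⟨mem_interior_iff_mem_nhds.mpr hNn, hWx⟩, hxD⟩, ?_⟩
    intro e he
    have heU : e ∈ U := by
      by_contra heU
      exact he.2 ⟨e, ⟨Set.mem_preimage.mpr (interior_subset he.1.1), heU⟩, rfl⟩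
    obtain ⟨i, hi⟩ := Set.mem_iUnion.mp heU
    have hVT : ∀ v, v ∈ interior Nc ∩ W ∩ (p '' ((p ⁻¹' Nc) \ U))ᶜ → v ∈ (φ i).target :=
      fun v hv => Set.mem_iInter.mp hv.1.2 i
    refine ⟨(φ i).symm, (φ i).continuousOn_symm.mono hVT, ?_, ?_⟩
    · intro v hv
      rw [congrFun (hφ i) ((φ i).symm v)]
      exact (φ i).right_inv (hVT v hv)
    · rw [congrFun (hφ i) e]
      exact (φ i).left_inv hi
  -- existence
  haveI : PathConnectedSpace X := inferInstance
  set eS : S := ⟨(x₀, y₀), h₀⟩ with heS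
  have hpeS : p eS = x₀ := rfl
  have hproj0 : Set.projIcc (0:ℝ) 1 zero_le_one 0 = 0 := by
    apply Subtype.ext; simp [Set.projIcc]
  have hproj1 : Set.projIcc (0:ℝ) 1 zero_le_one 1 = 1 := by
    apply Subtype.ext; simp [Set.projIcc]
  have hlift : ∀ x : X, ∃ g : ℝ → S, ContinuousOn g (Set.Icc 0 1) ∧ g 0 = eS ∧
      ∀ t ∈ Set.Icc (0:ℝ) 1, p (g t) = (PathConnectedSpace.somePath x₀ x).extend t :=
    fun x => stmt4_lift_exists hev (PathConnectedSpace.somePath x₀ x).continuous_extend eS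
      (by rw [hpeS, Path.extend_zero])
  choose g hgc hg0 hgp using hlift
  have wd : ∀ (x : X) (γ' : Path x₀ x) (g' : ℝ → S), ContinuousOn g' (Set.Icc 0 1) → g' 0 = eS →
      (∀ t ∈ Set.Icc (0:ℝ) 1, p (g' t) = γ'.extend t) → g' 1 = g x 1 := by
    intro x γ' g' hc h0 hl
    set γ : Path x₀ x := PathConnectedSpace.somePath x₀ x with hγ
    obtain ⟨Hty⟩ := SimplyConnectedSpace.paths_homotopic γ γ'
    set Hm : ℝ × ℝ → X := fun q =>
      Hty (Set.projIcc 0 1 zero_le_one q.2, Set.projIcc 0 1 zero_le_one q.1) with hHm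
    have hHc : Continuous Hm := Hty.continuous.comp
      ((continuous_projIcc.comp continuous_snd).prodMk (continuous_projIcc.comp continuous_fst))
    have hHm0 : ∀ s : ℝ, Hm (0, s) = x₀ := by
      intro s
      show Hty (_, Set.projIcc 0 1 zero_le_one 0) = x₀
      rw [hproj0]
      exact Hty.source _
    have hHm1 : ∀ s : ℝ, Hm (1, s) = x := by
      intro s
      show Hty (_, Set.projIcc 0 1 zero_le_one 1) = x
      rw [hproj1]
      exact Hty.target _
    have hHmt0 : ∀ t : ℝ, Hm (t, 0) = γ.extend t := by
      intro t
      show Hty (Set.projIcc 0 1 zero_le_one 0, _) = γ.extend t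
      rw [hproj0]
      exact Hty.apply_zero _
    have hHmt1 : ∀ t : ℝ, Hm (t, 1) = γ'.extend t := by
      intro t
      show Hty (Set.projIcc 0 1 zero_le_one 1, _) = γ'.extend t
      rw [hproj1]
      exact Hty.apply_one _
    have hmid : ∀ s : ℝ, ∃ gm : ℝ → S, ContinuousOn gm (Set.Icc 0 1) ∧ gm 0 = eS ∧
        ∀ t ∈ Set.Icc (0:ℝ) 1, p (gm t) = Hm (t, s) := by
      intro s
      exact stmt4_lift_exists hev (hHc.comp (continuous_id.prodMk continuous_const)) eS
        (by rw [hpeS]; exact (hHm0 s).symm)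
    choose gm hgmc hgm0 hgmp using hmid
    set gf : ℝ → ℝ → S := fun s => if s = 1 then g' else if s = 0 then g x else gm s with hgf
    have key : gf 1 1 = gf 0 1 := by
      apply stmt4_homotopy_inv sep inj hev hHc
      · intro s _
        rw [hHm1 s, hHm1 0]
      · intro s _
        show ContinuousOn (if s = 1 then g' else if s = 0 then g x else gm s) (Set.Icc 0 1)
        by_cases h1 : s = 1
        · simpa [h1] using hc
        by_cases h2 : s = 0
        · simpa [h1, h2] using hgc x
        · simpa [h1, h2] using hgmc s
      · intro s _
        have h00 : gf 0 0 = eS := by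
          show (if (0:ℝ) = 1 then g' else if (0:ℝ) = 0 then g x else gm 0) 0 = eS
          simp only [if_neg (by norm_num : ¬(0:ℝ) = 1), if_pos rfl]
          exact hg0 x
        rw [h00]
        show (if s = 1 then g' else if s = 0 then g x else gm s) 0 = eS
        by_cases h1 : s = 1
        · simpa [h1] using h0
        by_cases h2 : s = 0
        · simpa [h1, h2] using hg0 x
        · simpa [h1, h2] using hgm0 s
      · intro s hs t ht
        show p ((if s = 1 then g' else if s = 0 then g x else gm s) t) = Hm (t, s)
        by_cases h1 : s = 1
        · subst h1
          rw [if_pos rfl, hl t ht, hHmt1 t]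
        by_cases h2 : s = 0
        · subst h2
          rw [if_neg (by norm_num : ¬(0:ℝ) = 1), if_pos rfl, hgp x t ht, hHmt0 t]
        · rw [if_neg h1, if_neg h2]
          exact hgmp s t ht
    have k1 : gf 1 1 = g' 1 := by
      show (if (1:ℝ) = 1 then g' else if (1:ℝ) = 0 then g x else gm 1) 1 = g' 1
      rw [if_pos rfl]
    have k0 : gf 0 1 = g x 1 := by
      show (if (0:ℝ) = 1 then g' else if (0:ℝ) = 0 then g x else gm 0) 1 = g x 1
      rw [if_neg (by norm_num : ¬(0:ℝ) = 1), if_pos rfl]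
    rw [k1, k0] at key
    exact key
  have hF1 : ∀ x, p (g x 1) = x := fun x => by
    rw [hgp x 1 ⟨zero_le_one, le_refl 1⟩, Path.extend_one]
  set f : X → Y := fun x => ((g x 1 : X × Y)).2 with hf
  have hmemS : ∀ x, (x, f x) ∈ S := by
    intro x
    have hx : ((g x 1 : X × Y)) = (x, f x) := Prod.ext (hF1 x) rfl
    rw [← hx]
    exact (g x 1).2
  have hfx₀ : f x₀ = y₀ := by
    have h := wd x₀ (Path.refl x₀) (fun _ => eS) continuousOn_const rfl
      (fun t _ => by rw [Path.refl_extend]; rfl)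
    show ((g x₀ 1 : X × Y)).2 = y₀
    rw [← h]
  have hfc : Continuous f := by
    rw [continuous_iff_continuousAt]
    intro x₁
    obtain ⟨V, hVo, hVx, hVs⟩ := hev x₁
    obtain ⟨σ, hσc, hσp, hσe⟩ := hVs (g x₁ 1) (by rw [hF1 x₁]; exact hVx)
    obtain ⟨W, ⟨hWo, hWx, hWpc⟩, hWV⟩ :=
      (isOpen_isPathConnected_basis x₁).mem_iff.mp (hVo.mem_nhds hVx)
    have hFW : ∀ x ∈ W, g x 1 = σ x := by
      intro x hx
      have hjoined : JoinedIn W x₁ x := hWpc.joinedIn x₁ hWx x hx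
      set δ : Path x₁ x := hjoined.somePath with hδ
      have hδW : ∀ t : unitInterval, δ t ∈ W := hjoined.somePath_mem
      have hrange : ∀ t : ℝ, δ.extend t ∈ W := by
        intro t
        have h1 : δ.extend t ∈ Set.range δ := by
          rw [← Path.extend_range]; exact ⟨t, rfl⟩
        obtain ⟨u, hu⟩ := h1
        rw [← hu]; exact hδW u
      set γ' : Path x₀ x := (PathConnectedSpace.somePath x₀ x₁).trans δ with hγ'
      set g'' : ℝ → S := fun t => if t ≤ 1/2 then g x₁ (2*t) else σ (δ.extend (2*t - 1))
        with hg''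
      have hc1 : ContinuousOn (fun t : ℝ => g x₁ (2*t)) (Set.Icc 0 (1/2)) :=
        (hgc x₁).comp (continuous_const.mul continuous_id).continuousOn
          (fun t ht => ⟨by linarith [ht.1], by linarith [ht.2]⟩)
      have hc2 : ContinuousOn (fun t : ℝ => σ (δ.extend (2*t - 1))) (Set.Icc (1/2) 1) := by
        apply ContinuousOn.comp hσc
          ((δ.continuous_extend.comp ((continuous_const.mul continuous_id).sub
            continuous_const)).continuousOn)
        exact fun t _ => hWV (hrange _)
      have hjunc : g x₁ (2 * (1/2 : ℝ)) = σ (δ.extend (2*(1/2:ℝ) - 1)) := by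
        norm_num
        conv_lhs => rw [← hσe, hF1 x₁]
      have hcont : ContinuousOn g'' (Set.Icc 0 1) :=
        stmt4_glue (by norm_num) (by norm_num) hc1 hc2 hjunc
      have h0 : g'' 0 = eS := by
        show (if (0:ℝ) ≤ 1/2 then g x₁ (2*0) else _) = eS
        rw [if_pos (by norm_num : (0:ℝ) ≤ 1/2)]
        rw [show (2:ℝ)*0 = 0 by norm_num]
        exact hg0 x₁
      have hlft : ∀ t ∈ Set.Icc (0:ℝ) 1, p (g'' t) = γ'.extend t := by
        intro t ht
        show p (if t ≤ 1/2 then g x₁ (2*t) else σ (δ.extend (2*t - 1))) = γ'.extend t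
        rw [hγ', stmt4_trans_extend _ _ ht]
        by_cases h : t ≤ 1/2
        · rw [if_pos h, if_pos h]
          exact hgp x₁ (2*t) ⟨by linarith [ht.1], by linarith⟩
        · rw [if_neg h, if_neg h]
          exact hσp _ (hWV (hrange _))
      have hwd := wd x γ' g'' hcont h0 hlft
      rw [← hwd]
      show (if (1:ℝ) ≤ 1/2 then g x₁ (2*1) else σ (δ.extend (2*1 - 1))) = σ x
      rw [if_neg (by norm_num : ¬(1:ℝ) ≤ 1/2)]
      norm_num
    have hσcont : ContinuousAt σ x₁ := hσc.continuousAt (hVo.mem_nhds hVx)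
    have hFc : ContinuousAt (fun x => g x 1) x₁ := by
      apply ContinuousAt.congr hσcont
      exact Filter.eventuallyEq_of_mem (hWo.mem_nhds hWx) (fun x hx => (hFW x hx).symm)
    exact ((continuous_snd.comp continuous_subtype_val).continuousAt).comp hFc
  refine ⟨f, ⟨hfc, hfx₀, hmemS⟩, ?_⟩
  rintro f' ⟨hf'c, hf'0, hf'S⟩
  have hsec := sep.eq_of_comp_eq inj
    (Continuous.subtype_mk (continuous_id.prodMk hf'c) (fun x => hf'S x))
    (Continuous.subtype_mk (continuous_id.prodMk hfc) (fun x => hmemS x))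
    (funext fun x => rfl) x₀
    (Subtype.ext (Prod.ext rfl (hf'0.trans hfx₀.symm)))
  funext x
  exact congrArg (fun e : S => (e : X × Y).2) (congrFun hsec x)
end

section
/- A surjective proper local homeomorphism $p : E \to B$ between locally compact Hausdorff spaces is a covering map. -/
/-- A surjective proper local homeomorphism between locally compact Hausdorff
spaces is a covering map. -/
theorem stmt5 {E B : Type*} [TopologicalSpace E] [TopologicalSpace B]
    [LocallyCompactSpace E] [T2Space E] [LocallyCompactSpace B] [T2Space B]
    (p : E → B) (hcont : Continuous p) (hsurj : Function.Surjective p)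
    (hproper : ∀ K : Set B, IsCompact K → IsCompact (p ⁻¹' K))
    (hloc : IsLocalHomeomorph p) :
    IsCoveringMap p := by
  have hclosed : IsClosedMap p :=
    (isProperMap_iff_isCompact_preimage.mpr ⟨hcont, fun K hK => hproper K hK⟩).isClosedMap
  intro b
  set F : Set E := p ⁻¹' {b} with hF
  -- the fiber is discrete
  have hdisc : DiscreteTopology F := by
    rw [discreteTopology_iff_isOpen_singleton]
    rintro ⟨x, hx⟩
    obtain ⟨φ, hxφ, hpφ⟩ := hloc x
    have heq : ({⟨x, hx⟩} : Set F) = Subtype.val ⁻¹' φ.source := by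
      ext ⟨y, hy⟩
      simp only [Set.mem_preimage, Set.mem_singleton_iff, Subtype.mk_eq_mk]
      constructor
      · rintro rfl; exact hxφ
      · intro hyφ
        exact φ.injOn hyφ hxφ (by rw [← hpφ]; exact hy.trans hx.symm)
    rw [heq]
    exact φ.open_source.preimage continuous_subtype_val
  have hFin : F.Finite := (hproper _ isCompact_singleton).finite (isDiscrete_iff_discreteTopology.mpr hdisc)
  have : Finite F := hFin.to_subtype
  -- choose local homeomorphisms at each fiber point
  have hφ : ∀ e : F, ∃ φ : OpenPartialHomeomorph E B, (e : E) ∈ φ.source ∧ p = φ := fun e => hloc e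
  choose φ hmem hpφ using hφ
  -- pairwise disjoint opens separating fiber points
  obtain ⟨W, hW, hWd⟩ := hFin.t2_separation
  -- sheet neighborhoods
  set U : F → Set E := fun e => (φ e).source ∩ W e with hU
  have hUopen : ∀ e, IsOpen (U e) := fun e => (φ e).open_source.inter (hW _).2
  have hUmem : ∀ e : F, (e : E) ∈ U e := fun e => ⟨hmem e, (hW _).1⟩
  have hUdisj : ∀ e e' : F, e ≠ e' → Disjoint (U e) (U e') := by
    intro e e' hne
    exact Disjoint.mono Set.inter_subset_right Set.inter_subset_right
      (hWd e.2 e'.2 (fun h => hne (Subtype.ext h)))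
  -- the base neighborhood
  set V : Set B := (⋂ e : F, (φ e) '' U e) \ p '' (⋃ e : F, U e)ᶜ with hV
  have hpe : ∀ e : F, p e = b := fun e => e.2
  have hVopen : IsOpen V :=
    (isOpen_iInter_of_finite fun e =>
      (φ e).isOpen_image_of_subset_source (hUopen e) Set.inter_subset_left).sdiff
      (hclosed _ (isOpen_iUnion hUopen).isClosed_compl)
  have hbV : b ∈ V := by
    constructor
    · refine Set.mem_iInter.mpr fun e => ⟨e, hUmem e, ?_⟩
      rw [← congrFun (hpφ e) e]; exact hpe e
    · rintro ⟨x, hx, rfl⟩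
      exact hx (Set.mem_iUnion.mpr ⟨⟨x, rfl⟩, hUmem _⟩)
  have hpeq : ∀ (e : F) (x : E), p x = φ e x := fun e x => congrFun (hpφ e) x
  have hVsub : ∀ e : F, V ⊆ (φ e).target := fun e v hv => by
    obtain ⟨x, hx, rfl⟩ := Set.mem_iInter.mp hv.1 e
    exact (φ e).map_source hx.1
  have hsymm_mem : ∀ (e : F) (v : B), v ∈ V → (φ e).symm v ∈ U e := by
    intro e v hv
    obtain ⟨x, hx, rfl⟩ := Set.mem_iInter.mp hv.1 e
    rwa [(φ e).left_inv hx.1]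
  have hsymm_p : ∀ (e : F) (v : B), v ∈ V → p ((φ e).symm v) = v := fun e v hv => by
    rw [hpeq e]; exact (φ e).right_inv (hVsub e hv)
  have hcov : ∀ x : E, p x ∈ V → ∃ e : F, x ∈ U e := by
    intro x hx
    by_contra h
    push_neg at h
    exact hx.2 ⟨x, fun hm => (Set.mem_iUnion.mp hm).elim h, rfl⟩
  obtain ⟨e₀, he₀⟩ := hsurj b
  classical
  set sheet : E → F := fun x => if h : ∃ e : F, x ∈ U e then h.choose else ⟨e₀, he₀⟩
    with hsheet
  have sheet_eq : ∀ (x : E) (e : F), x ∈ U e → sheet x = e := by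
    intro x e hx
    have h : ∃ e : F, x ∈ U e := ⟨e, hx⟩
    rw [hsheet]
    simp only [dif_pos h]
    by_contra hne
    exact Set.disjoint_left.mp (hUdisj _ _ hne) h.choose_spec hx
  -- the trivialization
  refine IsEvenlyCovered.of_trivialization (t := {
      toFun := fun x => (p x, sheet x)
      invFun := fun q => (φ q.2).symm q.1
      source := p ⁻¹' V
      target := V ×ˢ Set.univ
      map_source' := fun x hx => ⟨hx, trivial⟩
      map_target' := fun q hq => by
        simpa [hsymm_p q.2 q.1 hq.1] using hq.1
      left_inv' := fun x hx => by
        obtain ⟨e, he⟩ := hcov x hx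
        show (φ (sheet x)).symm (p x) = x
        rw [sheet_eq x e he, hpeq e, (φ e).left_inv he.1]
      right_inv' := fun q hq => by
        have h1 := hsymm_p q.2 q.1 hq.1
        have h2 := sheet_eq _ _ (hsymm_mem q.2 q.1 hq.1)
        simp [h1, h2]
      open_source := hVopen.preimage hcont
      open_target := hVopen.prod isOpen_univ
      continuousOn_toFun := by
        apply ContinuousOn.prodMk (hcont.continuousOn)
        intro x hx
        apply ContinuousAt.continuousWithinAt
        obtain ⟨e, he⟩ := hcov x hx
        have : sheet =ᶠ[nhds x] fun _ => e := by
          filter_upwards [(hUopen e).mem_nhds he] with y hy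
          exact sheet_eq y e hy
        exact ContinuousAt.congr continuousAt_const this.symm
      continuousOn_invFun := by
        rintro ⟨v, e⟩ hq
        apply ContinuousAt.continuousWithinAt
        have h1 : ContinuousAt (fun q : B × F => (φ e).symm q.1)
            (v, e) := ((φ e).continuousAt_symm
              (hVsub e hq.1)).comp continuousAt_fst
        refine h1.congr ?_
        have hopen : IsOpen ((Set.univ : Set B) ×ˢ ({e} : Set ↥F)) :=
          isOpen_univ.prod (isOpen_discrete _)
        filter_upwards [hopen.mem_nhds ⟨trivial, rfl⟩]
        rintro ⟨v', e'⟩ ⟨-, he'⟩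
        simp only [Set.mem_singleton_iff] at he'
        rw [he']
      baseSet := V
      open_baseSet := hVopen
      source_eq := rfl
      target_eq := rfl
      proj_toFun := fun x _ => rfl }) hbV
end
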